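/- Let D be an integrally closed integral domain and ⋆ a semistar operation on D such that D is a ⋆-domain. Then for all E, F ∈ f(D): (E :_D F)^⋆ = (E^⋆ :_{D^⋆} F). In particular, D is a ((⋆̄)_f, ⋆_f)-domain, and consequently (E ∩ F)^⋆ = E^⋆ ∩ F^⋆ for all E, F ∈ f(D). -/

import Mathlib

open Submodule

namespace Semistar

/-- A semistar operation on an integral domain `D` with quotient field `K`:
a map on `D`-submodules of `K` satisfying the semistar axioms on nonzero submodules. -/
structure SemistarOp (D K : Type*) [CommRing D] [Field K] [Algebra D K] where
  star : Submodule D K → Submodule D K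
  star_smul_mul : ∀ x : K, x ≠ 0 → ∀ E : Submodule D K, E ≠ ⊥ →
    star (span D {x} * E) = span D {x} * star E
  star_mono : ∀ E F : Submodule D K, E ≠ ⊥ → F ≠ ⊥ → E ≤ F → star E ≤ star F
  le_star : ∀ E : Submodule D K, E ≠ ⊥ → E ≤ star E
  star_star : ∀ E : Submodule D K, E ≠ ⊥ → star (star E) = star E

variable {D K : Type*} [CommRing D] [Field K] [Algebra D K]

/-- The finite-type semistar operation `⋆_f` associated to `⋆`. -/
def finStar (t : Submodule D K → Submodule D K) : Submodule D K → Submodule D K :=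
  fun E => ⨆ F ∈ {F : Submodule D K | F ≠ ⊥ ∧ F.FG ∧ F ≤ E}, t F

/-- The image in `K` of an ideal of `D`. -/
def idealToK (I : Ideal D) : Submodule D K :=
  Submodule.map (Algebra.linearMap D K) I

/-- `I` is a quasi-`⋆`-ideal: a nonzero ideal of `D` with `I^⋆ ∩ D = I`. -/
def IsQuasiIdeal (t : Submodule D K → Submodule D K) (I : Ideal D) : Prop :=
  I ≠ ⊥ ∧ t (idealToK I) ⊓ 1 = idealToK I

/-- `M` is a quasi-`⋆`-maximal ideal: maximal among quasi-`⋆`-ideals. -/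
def IsQuasiMaximal (t : Submodule D K → Submodule D K) (M : Ideal D) : Prop :=
  IsQuasiIdeal t M ∧ ∀ J : Ideal D, IsQuasiIdeal t J → M ≤ J → M = J

/-- The localization `E·D_M` of a submodule `E` of `K` at (the complement of) an ideal `M`. -/
def locAt (M : Ideal D) (E : Submodule D K) : Submodule D K where
  carrier := {x : K | ∃ s ∈ Submonoid.closure ((M : Set D)ᶜ), s • x ∈ E}
  add_mem' := by
    rintro x y ⟨s, hs, hsx⟩ ⟨t, ht, hty⟩
    refine ⟨s * t, mul_mem hs ht, ?_⟩
    have h1 : (s * t) • x ∈ E := by rw [mul_comm, mul_smul]; exact E.smul_mem t hsx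
    have h2 : (s * t) • y ∈ E := by rw [mul_smul]; exact E.smul_mem s hty
    rw [smul_add]; exact E.add_mem h1 h2
  zero_mem' := ⟨1, Submonoid.one_mem _, by simp⟩
  smul_mem' := by
    rintro c x ⟨s, hs, hsx⟩
    exact ⟨s, hs, by rw [smul_comm]; exact E.smul_mem c hsx⟩

/-- The spectral semistar operation `⋆̃` associated to `⋆`, defined by
`E^⋆̃ = ⋂ { E·D_M : M quasi-`⋆_f`-maximal }`. -/
def tildeStar (s : SemistarOp D K) : Submodule D K → Submodule D K :=
  fun E => ⨅ M ∈ {M : Ideal D | IsQuasiMaximal (finStar s.star) M}, locAt M E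

/-- The localizing system `F^⋆` of ideals `I` with `I^⋆ = D^⋆`. -/
def starLS (s : SemistarOp D K) : Set (Ideal D) :=
  {I : Ideal D | I ≠ ⊥ ∧ s.star (idealToK I) = s.star 1}

/-- The stable semistar operation `⋆̄` associated to `⋆`:
`E^⋆̄ = ⋃ {(E : J) : J ∈ F^⋆}`. -/
def barStar (s : SemistarOp D K) : Submodule D K → Submodule D K :=
  fun E => ⨆ J ∈ starLS s, E / idealToK J

/-- `I` is `⋆`-invertible: `(I·I⁻¹)^⋆ = D^⋆`. -/
def IsStarInvertible (t : Submodule D K → Submodule D K) (I : Submodule D K) : Prop :=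
  t (I * (1 / I)) = t 1

/-- `D` is a `⋆`-domain: every nonzero finitely generated `D`-submodule of `K`
is `⋆`-invertible. -/
def IsStarDomain (t : Submodule D K → Submodule D K) : Prop :=
  ∀ I : Submodule D K, I ≠ ⊥ → I.FG → IsStarInvertible t I

/-- `D` is a Prüfer `⋆`-multiplication domain: every nonzero finitely generated
ideal of `D` is `⋆_f`-invertible. -/
def IsPMD (t : Submodule D K → Submodule D K) : Prop :=
  ∀ I : Submodule D K, I ≠ ⊥ → I.FG → I ≤ 1 → IsStarInvertible (finStar t) I

/-- `D` is a P⋆MD for the semistar operation `s`. -/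
abbrev IsPStarMD (s : SemistarOp D K) : Prop := IsPMD s.star

/-- Equality of two semistar operations (as maps on nonzero submodules):
`D` is a `(∗₁, ∗₂)`-domain. -/
def StarEq (t₁ t₂ : Submodule D K → Submodule D K) : Prop :=
  ∀ E : Submodule D K, E ≠ ⊥ → t₁ E = t₂ E

/-- `⋆` is a.b. -/
def IsAB (t : Submodule D K → Submodule D K) : Prop :=
  ∀ E : Submodule D K, E ≠ ⊥ → E.FG → ∀ F G : Submodule D K, F ≠ ⊥ → G ≠ ⊥ →
    t (E * F) ≤ t (E * G) → t F ≤ t G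

/-- `⋆` is e.a.b. -/
def IsEAB (t : Submodule D K → Submodule D K) : Prop :=
  ∀ E F G : Submodule D K, E ≠ ⊥ → E.FG → F ≠ ⊥ → F.FG → G ≠ ⊥ → G.FG →
    t (E * F) ≤ t (E * G) → t F ≤ t G

/-- `D` is quasi-`⋆`-integrally closed: `D^⋆ = ⋃ {(F^⋆ : F^⋆) : F ∈ f(D)}`. -/
def IsQuasiStarIntegrallyClosed (t : Submodule D K → Submodule D K) : Prop :=
  (t 1 : Set K) = ⋃ F ∈ {F : Submodule D K | F ≠ ⊥ ∧ F.FG}, ((t F / t F : Submodule D K) : Set K)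

/-- The submodule `S` of `K` is integrally closed in `K`. -/
def IsIntegrallyClosedIn (S : Submodule D K) : Prop :=
  ∀ x : K, (∃ p : Polynomial K, p.Monic ∧ (∀ i, p.coeff i ∈ S) ∧ Polynomial.eval x p = 0) → x ∈ S

/-- `D` is `⋆`-Noetherian: ACC on quasi-`⋆`-ideals. -/
def IsStarNoetherian (t : Submodule D K → Submodule D K) : Prop :=
  ∀ c : ℕ → Ideal D, (∀ n, IsQuasiIdeal t (c n)) → Monotone c →
    ∃ n, ∀ m, n ≤ m → c m = c n

/-- `D` is `⋆`-extracoherent. -/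
def IsExtraCoherent (t : Submodule D K → Submodule D K) : Prop :=
  ∀ E F : Submodule D K, E ≠ ⊥ → E.FG → F ≠ ⊥ → F.FG → E ⊓ F ≠ ⊥ →
    ∃ J : Submodule D K, J ≠ ⊥ ∧ J.FG ∧ J ≤ E ⊓ F ∧ t J = t E ⊓ t F

/-- `D` is truly `⋆`-coherent. -/
def IsTrulyCoherent (t : Submodule D K → Submodule D K) : Prop :=
  ∀ E F : Submodule D K, E ≠ ⊥ → E.FG → F ≠ ⊥ → F.FG → E ⊓ F ≠ ⊥ →
    ∃ J : Submodule D K, J ≠ ⊥ ∧ J.FG ∧ t J = t (E ⊓ F)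

/-- `D` is `⋆`-coherent. -/
def IsCoherent (t : Submodule D K → Submodule D K) : Prop :=
  ∀ E F : Submodule D K, E ≠ ⊥ → E.FG → F ≠ ⊥ → F.FG → E ⊓ F ≠ ⊥ →
    ∃ J : Submodule D K, J ≠ ⊥ ∧ J.FG ∧ t J = t E ⊓ t F

/-- `D` is `⋆`-quasi-coherent. -/
def IsQuasiCoherent (t : Submodule D K → Submodule D K) : Prop :=
  ∀ F : Submodule D K, F ≠ ⊥ → F.FG →
    ∃ G : Submodule D K, G ≠ ⊥ ∧ G.FG ∧ t ((1 : Submodule D K) / F) = t G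

/-- `D` is an `H(⋆)`-domain. -/
def IsHDomain (t : Submodule D K → Submodule D K) : Prop :=
  ∀ I : Ideal D, I ≠ ⊥ → t (idealToK I) = t 1 →
    ∃ J : Ideal D, J ≠ ⊥ ∧ J.FG ∧ J ≤ I ∧ t (idealToK J) = t 1

/-- `D` is an `I(⋆)`-domain. -/
def IsIDomain (s : SemistarOp D K) : Prop :=
  ∀ I : Submodule D K, I ≠ ⊥ → I.FG → I ≤ 1 →
    (IsStarInvertible s.star I ↔ IsStarInvertible (finStar s.star) I)

/-!
In a `⋆`-domain every `G ∈ f(D)` is `⋆`-invertible, so `(A^⋆ : G) ⊆ (A (D : G))^⋆`. Taking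
`A = EF`, `G = E + F` and using `EF (D : E + F) ⊆ E ∩ F` gives `(E ∩ F)^⋆ = E^⋆ ∩ F^⋆` on `f(D)`.
For `x ∈ F^⋆` the ideal `J = x⁻¹F ∩ D` then satisfies `J^⋆ = x⁻¹F^⋆ ∩ D^⋆ = D^⋆` and `xJ ⊆ F`,
so `⋆` and `⋆̄` agree on `f(D)`, whence `⋆̄_f = ⋆_f`. Finally `⋆̄` is stable, so it commutes with
finite intersections and hence with `(- : F)` for `F ∈ f(D)`; thus
`(E^⋆ : F) ∩ D^⋆ = (E :_D F)^⋆̄ ⊆ (E :_D F)^⋆`.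
-/

theorem finStar_congr {t₁ t₂ : Submodule D K → Submodule D K}
    (h : ∀ F : Submodule D K, F ≠ ⊥ → F.FG → t₁ F = t₂ F) : finStar t₁ = finStar t₂ :=
  funext fun _ => iSup_congr fun F => iSup_congr fun hF => h F hF.1 hF.2.1

theorem span_singleton_mul_le_iff_forall {x : K} {A B : Submodule D K} :
    span D {x} * A ≤ B ↔ ∀ a ∈ A, x * a ∈ B := by
  rw [span_singleton_mul]
  exact ⟨fun h a ha => h (smul_mem_pointwise_smul a x A ha), fun h => by
    rintro _ ⟨a, ha, rfl⟩
    exact h a ha⟩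

theorem div_mono_left {E E' : Submodule D K} (h : E ≤ E') (F : Submodule D K) :
    E / F ≤ E' / F :=
  fun _ hx => mem_div_iff_forall_mul_mem.mpr fun y hy => h (mem_div_iff_forall_mul_mem.mp hx y hy)

theorem div_antitone_right (E : Submodule D K) {F G : Submodule D K} (h : F ≤ G) :
    E / G ≤ E / F :=
  fun _ hx => mem_div_iff_forall_mul_mem.mpr fun y hy => mem_div_iff_forall_mul_mem.mp hx y (h hy)

theorem div_sup_eq_inf_div (E F G : Submodule D K) : E / (F ⊔ G) = E / F ⊓ E / G := by
  refine le_antisymm (le_inf (div_antitone_right E le_sup_left)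
    (div_antitone_right E le_sup_right)) ?_
  rw [Submodule.le_div_iff_mul_le, Submodule.mul_sup]
  exact sup_le (Submodule.le_div_iff_mul_le.mp inf_le_left)
    (Submodule.le_div_iff_mul_le.mp inf_le_right)

theorem inf_div_eq_div_inf (A B F : Submodule D K) : A / F ⊓ B / F = (A ⊓ B) / F := by
  ext x
  simp only [mem_inf, mem_div_iff_forall_mul_mem]
  exact forall₂_and.symm

theorem mul_one_div_le_div (E F : Submodule D K) : E * (1 / F) ≤ E / F := by
  rw [Submodule.le_div_iff_mul_le, mul_assoc, mul_comm (1 / F)]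
  exact (mul_le_mul_right mul_one_div_le_one E).trans (mul_one E).le

theorem submodule_one_ne_bot : (1 : Submodule D K) ≠ ⊥ :=
  (Submodule.ne_bot_iff _).mpr ⟨1, one_le.mp le_rfl, one_ne_zero⟩

theorem submodule_one_fg : (1 : Submodule D K).FG :=
  one_eq_span (R := D) (A := K) ▸ fg_span_singleton 1

namespace SemistarOp

variable (s : SemistarOp D K) {E F A B G : Submodule D K}

theorem star_ne_bot (hE : E ≠ ⊥) : s.star E ≠ ⊥ :=
  fun h => hE (le_bot_iff.mp (h ▸ s.le_star E hE))

theorem one_mem_star_one : (1 : K) ∈ s.star 1 :=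
  s.le_star 1 submodule_one_ne_bot (one_le.mp le_rfl)

theorem mul_mem_star_of_span_mul_le {x a : K} (hA : A ≠ ⊥) (hB : B ≠ ⊥)
    (h : span D {x} * A ≤ B) (ha : a ∈ s.star A) : x * a ∈ s.star B := by
  rcases eq_or_ne x 0 with rfl | hx
  · simp
  have hxA : span D {x} * A ≠ ⊥ := by simp [hx, hA]
  have hxa : x * a ∈ s.star (span D {x} * A) :=
    s.star_smul_mul x hx A hA ▸ mul_mem_mul (mem_span_singleton_self x) ha
  exact s.star_mono _ _ hxA hB h hxa

theorem star_mul_le (hE : E ≠ ⊥) (hF : F ≠ ⊥) : s.star E * F ≤ s.star (E * F) := by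
  rw [mul_le]
  intro a ha f hf
  rw [mul_comm a f]
  refine s.mul_mem_star_of_span_mul_le hE (by simp [hE, hF]) ?_ ha
  rw [mul_comm]
  exact mul_le_mul_right ((span_singleton_le_iff_mem f F).mpr hf) E

theorem star_star_mul (hE : E ≠ ⊥) (hF : F ≠ ⊥) : s.star (s.star E * F) = s.star (E * F) := by
  have hEF : E * F ≠ ⊥ := by simp [hE, hF]
  have hle : E * F ≤ s.star E * F := mul_le_mul_left (s.le_star E hE) F
  have hsEF : s.star E * F ≠ ⊥ := fun h => hEF (le_bot_iff.mp (h ▸ hle))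
  refine le_antisymm ?_ (s.star_mono _ _ hEF hsEF hle)
  have := s.star_mono _ _ hsEF (s.star_ne_bot hEF) (s.star_mul_le hE hF)
  rwa [s.star_star _ hEF] at this

theorem star_mul_star_one_le (hE : E ≠ ⊥) : s.star E * s.star 1 ≤ s.star E := by
  have h1 : s.star 1 ≠ ⊥ := s.star_ne_bot submodule_one_ne_bot
  calc s.star E * s.star 1 ≤ s.star (E * s.star 1) := s.star_mul_le hE h1
    _ = s.star (s.star 1 * E) := by rw [mul_comm]
    _ = s.star E := by rw [s.star_star_mul submodule_one_ne_bot hE, one_mul]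

theorem star_div_le (hE : E ≠ ⊥) (hF : F ≠ ⊥) (hEF : E / F ≠ ⊥) :
    s.star (E / F) ≤ s.star E / F := by
  rw [Submodule.le_div_iff_mul_le]
  refine (s.star_mul_le hEF hF).trans (s.star_mono _ _ (by simp [hEF, hF]) hE ?_)
  exact Submodule.le_div_iff_mul_le.mp le_rfl

theorem star_div_le_star_mul_one_div (hA : A ≠ ⊥) (hG : G ≠ ⊥) (hG' : 1 / G ≠ ⊥)
    (hinv : IsStarInvertible s.star G) : s.star A / G ≤ s.star (A * (1 / G)) := by
  intro x hx
  have hGG : G * (1 / G) ≠ ⊥ := by simp [hG, hG']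
  rw [← s.star_star_mul hA hG', ← mul_one x]
  refine s.mul_mem_star_of_span_mul_le hGG (by simp [s.star_ne_bot hA, hG']) ?_
    (hinv.symm ▸ s.one_mem_star_one)
  rw [← mul_assoc]
  exact mul_le_mul_left (span_singleton_mul_le_iff_forall.mpr hx) _

theorem barStar_mono {A B : Submodule D K} (h : A ≤ B) : barStar s A ≤ barStar s B :=
  iSup₂_mono fun _ _ => div_mono_left h _

theorem top_mem_starLS : (⊤ : Ideal D) ∈ starLS s := by
  have h1 : (idealToK (⊤ : Ideal D) : Submodule D K) = 1 := by
    rw [idealToK, Submodule.map_top, one_eq_range]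
  refine ⟨fun h => submodule_one_ne_bot (D := D) (K := K) ?_, by rw [h1]⟩
  rw [← h1, h, idealToK, Submodule.map_bot]

end SemistarOp

theorem idealToK_mono {I J : Ideal D} (h : I ≤ J) : (idealToK I : Submodule D K) ≤ idealToK J :=
  map_mono h

section FractionField

variable [IsFractionRing D K] {E F : Submodule D K}

theorem exists_algebraMap_mem (hE : E ≠ ⊥) :
    ∃ d : D, algebraMap D K d ≠ 0 ∧ algebraMap D K d ∈ E := by
  obtain ⟨x, hxE, hx0⟩ := E.ne_bot_iff.mp hE
  obtain ⟨b, d, hd⟩ := IsLocalization.exists_integer_multiple (nonZeroDivisors D) x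
  refine ⟨d, ?_, hd ▸ E.smul_mem _ hxE⟩
  rw [hd, Algebra.smul_def]
  exact mul_ne_zero (IsLocalization.map_units K b).ne_zero hx0

theorem inf_ne_bot (hE : E ≠ ⊥) (hF : F ≠ ⊥) : E ⊓ F ≠ ⊥ := by
  obtain ⟨a, ha0, haE⟩ := exists_algebraMap_mem hE
  obtain ⟨b, hb0, hbF⟩ := exists_algebraMap_mem hF
  refine (Submodule.ne_bot_iff _).mpr ⟨algebraMap D K (a * b), mem_inf.mpr ⟨?_, ?_⟩, ?_⟩
  · rw [mul_comm, map_mul, ← Algebra.smul_def]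
    exact E.smul_mem b haE
  · rw [map_mul, ← Algebra.smul_def]
    exact F.smul_mem a hbF
  · rw [map_mul]
    exact mul_ne_zero ha0 hb0

theorem one_div_ne_bot (hF : F.FG) : 1 / F ≠ ⊥ := by
  obtain ⟨a, ha, hint⟩ := FractionalIdeal.isFractional_of_fg (S := nonZeroDivisors D) hF
  refine (Submodule.ne_bot_iff _).mpr ⟨algebraMap D K a, fun y hy => ?_, ?_⟩
  · obtain ⟨d, hd⟩ := hint y hy
    exact mem_one.mpr ⟨d, by rw [hd, Algebra.smul_def]⟩
  · exact IsLocalization.map_units K ⟨a, ha⟩ |>.ne_zero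

theorem div_ne_bot (hE : E ≠ ⊥) (hF : F.FG) : E / F ≠ ⊥ := fun h =>
  (show E * (1 / F) ≠ ⊥ by simp [hE, one_div_ne_bot hF])
    (le_bot_iff.mp (h ▸ mul_one_div_le_div E F))

theorem idealToK_ne_bot {I : Ideal D} (hI : I ≠ ⊥) : (idealToK I : Submodule D K) ≠ ⊥ := by
  rw [idealToK, ← map_bot (Algebra.linearMap D K)]
  exact (map_injective_of_injective (IsFractionRing.injective D K)).ne hI

namespace SemistarOp

variable (s : SemistarOp D K)

theorem star_inf_eq (h : IsStarDomain s.star) (hE : E ≠ ⊥) (hEg : E.FG) (hF : F ≠ ⊥)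
    (hFg : F.FG) : s.star (E ⊓ F) = s.star E ⊓ s.star F := by
  have hEF : E ⊓ F ≠ ⊥ := inf_ne_bot hE hF
  refine le_antisymm
    (le_inf (s.star_mono _ _ hEF hE inf_le_left) (s.star_mono _ _ hEF hF inf_le_right)) ?_
  have hP : E * F ≠ ⊥ := by simp [hE, hF]
  have hS : E ⊔ F ≠ ⊥ := by simp [hE]
  have hSg : (E ⊔ F).FG := hEg.sup hFg
  have hS' : 1 / (E ⊔ F) ≠ ⊥ := one_div_ne_bot hSg
  have hdiv : s.star E ⊓ s.star F ≤ s.star (E * F) / (E ⊔ F) := by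
    rw [div_sup_eq_inf_div, le_inf_iff, Submodule.le_div_iff_mul_le, Submodule.le_div_iff_mul_le]
    refine ⟨?_, (mul_le_mul_left inf_le_left F).trans (s.star_mul_le hE hF)⟩
    calc (s.star E ⊓ s.star F) * E ≤ s.star F * E := mul_le_mul_left inf_le_right E
      _ ≤ s.star (F * E) := s.star_mul_le hF hE
      _ = s.star (E * F) := by rw [mul_comm]
  have hle_one {A : Submodule D K} (hA : A ≤ E ⊔ F) : A * (1 / (E ⊔ F)) ≤ 1 :=
    (mul_le_mul_left hA _).trans mul_one_div_le_one
  have hsub : E * F * (1 / (E ⊔ F)) ≤ E ⊓ F := by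
    refine le_inf ?_ ?_
    · rw [mul_assoc]
      exact (mul_le_mul_right (hle_one le_sup_right) E).trans (mul_one E).le
    · rw [mul_comm E F, mul_assoc]
      exact (mul_le_mul_right (hle_one le_sup_left) F).trans (mul_one F).le
  calc s.star E ⊓ s.star F ≤ s.star (E * F) / (E ⊔ F) := hdiv
    _ ≤ s.star (E * F * (1 / (E ⊔ F))) :=
      s.star_div_le_star_mul_one_div hP hS hS' (h _ hS hSg)
    _ ≤ s.star (E ⊓ F) := s.star_mono _ _ (by simp [hP, hS']) hEF hsub

theorem mul_mem_starLS {I J : Ideal D} (hI : I ∈ starLS s) (hJ : J ∈ starLS s) :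
    I * J ∈ starLS s := by
  have hIK : (idealToK I : Submodule D K) ≠ ⊥ := idealToK_ne_bot hI.1
  have hJK : (idealToK J : Submodule D K) ≠ ⊥ := idealToK_ne_bot hJ.1
  have hmul : (idealToK (I * J) : Submodule D K) = idealToK I * idealToK J :=
    Submodule.map_mul I J (Algebra.ofId D K)
  refine ⟨fun h => ?_, ?_⟩
  · rw [h, idealToK, Submodule.map_bot, eq_comm, mul_eq_bot] at hmul
    exact hmul.elim hIK hJK
  · rw [hmul, ← s.star_star_mul hIK hJK, hI.2, s.star_star_mul submodule_one_ne_bot hJK,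
      one_mul, hJ.2]

theorem mem_barStar_iff {A : Submodule D K} {x : K} :
    x ∈ barStar s A ↔ ∃ J ∈ starLS s, x ∈ A / idealToK J := by
  have : Nonempty (starLS s) := ⟨⟨⊤, s.top_mem_starLS⟩⟩
  have hdir : Directed (· ≤ ·) fun J : starLS s => A / idealToK J.1 := by
    rintro ⟨J₁, h₁⟩ ⟨J₂, h₂⟩
    refine ⟨⟨J₁ * J₂, s.mul_mem_starLS h₁ h₂⟩, ?_, ?_⟩
    · exact div_antitone_right A (idealToK_mono Ideal.mul_le_left)
    · exact div_antitone_right A (idealToK_mono Ideal.mul_le_right)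
  rw [barStar, iSup_subtype', mem_iSup_of_directed _ hdir]
  exact ⟨fun ⟨⟨J, hJ⟩, hx⟩ => ⟨J, hJ, hx⟩, fun ⟨J, hJ, hx⟩ => ⟨⟨J, hJ⟩, hx⟩⟩

theorem barStar_le_star {A : Submodule D K} (hA : A ≠ ⊥) : barStar s A ≤ s.star A := by
  intro x hx
  obtain ⟨J, ⟨hJ, hJs⟩, hxJ⟩ := s.mem_barStar_iff.mp hx
  rw [← mul_one x]
  exact s.mul_mem_star_of_span_mul_le (idealToK_ne_bot hJ) hA
    (span_singleton_mul_le_iff_forall.mpr hxJ) (hJs ▸ s.one_mem_star_one)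

theorem barStar_inf (A B : Submodule D K) : barStar s (A ⊓ B) = barStar s A ⊓ barStar s B := by
  refine le_antisymm (le_inf (s.barStar_mono inf_le_left) (s.barStar_mono inf_le_right)) ?_
  rintro x ⟨hxA, hxB⟩
  obtain ⟨J₁, h₁, hx₁⟩ := s.mem_barStar_iff.mp hxA
  obtain ⟨J₂, h₂, hx₂⟩ := s.mem_barStar_iff.mp hxB
  refine s.mem_barStar_iff.mpr ⟨J₁ * J₂, s.mul_mem_starLS h₁ h₂, ?_⟩
  rw [← inf_div_eq_div_inf]
  exact ⟨div_antitone_right A (idealToK_mono Ideal.mul_le_left) hx₁,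
    div_antitone_right B (idealToK_mono Ideal.mul_le_right) hx₂⟩

theorem barStar_div_le {F : Submodule D K} (hF : F.FG) (E : Submodule D K) :
    barStar s E / F ≤ barStar s (E / F) := by
  induction F, hF using fg_induction with
  | singleton a =>
    intro x hx
    obtain ⟨J, hJ, hxJ⟩ :=
      s.mem_barStar_iff.mp (mem_div_iff_forall_mul_mem.mp hx a (mem_span_singleton_self a))
    refine s.mem_barStar_iff.mpr ⟨J, hJ, mem_div_iff_forall_mul_mem.mpr fun j hj => ?_⟩
    refine mem_div_iff_forall_mul_mem.mpr fun y hy => ?_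
    obtain ⟨c, rfl⟩ := mem_span_singleton.mp hy
    rw [mul_smul_comm, mul_right_comm]
    exact E.smul_mem c (mem_div_iff_forall_mul_mem.mp hxJ j hj)
  | sup F₁ F₂ _ _ ih₁ ih₂ =>
    rw [div_sup_eq_inf_div, div_sup_eq_inf_div, s.barStar_inf]
    exact inf_le_inf ih₁ ih₂

theorem barStar_eq_star (h : IsStarDomain s.star) (hF : F ≠ ⊥) (hFg : F.FG) :
    barStar s F = s.star F := by
  refine le_antisymm (s.barStar_le_star hF) fun x hx => ?_
  rcases eq_or_ne x 0 with rfl | hx0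
  · exact zero_mem _
  set M := span D {x⁻¹} * F
  have hM : M ≠ ⊥ := by simp [M, hx0, hF]
  obtain ⟨J, hJ⟩ : ∃ J : Ideal D, idealToK J = M ⊓ 1 :=
    ⟨comap (Algebra.linearMap D K) (M ⊓ 1), by
      rw [idealToK, map_comap_eq, ← one_eq_range, inf_of_le_right inf_le_right]⟩
  have hstar : s.star (M ⊓ 1) = s.star 1 := by
    rw [s.star_inf_eq h hM ((fg_span_singleton _).mul hFg) submodule_one_ne_bot submodule_one_fg,
      s.star_smul_mul _ (inv_ne_zero hx0) F hF, inf_eq_right]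
    intro d hd
    have hxd : x * d ∈ s.star F := s.star_mul_star_one_le hF (mul_mem_mul hx hd)
    simpa [hx0] using mul_mem_mul (mem_span_singleton_self x⁻¹) hxd
  have hJ0 : J ≠ ⊥ := fun h0 =>
    inf_ne_bot hM submodule_one_ne_bot (by rw [← hJ, h0, idealToK, Submodule.map_bot])
  refine s.mem_barStar_iff.mpr ⟨J, ⟨hJ0, hJ ▸ hstar⟩, ?_⟩
  rw [hJ, mem_div_iff_forall_mul_mem]
  rintro y ⟨hyM, -⟩
  obtain ⟨f, hf, rfl⟩ := mem_span_singleton_mul.mp hyM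
  rwa [mul_inv_cancel_left₀ hx0]

theorem star_colon_eq (h : IsStarDomain s.star) (hE : E ≠ ⊥) (hEg : E.FG) (hF : F ≠ ⊥)
    (hFg : F.FG) : s.star (E / F ⊓ 1) = s.star E / F ⊓ s.star 1 := by
  have hEF : E / F ≠ ⊥ := div_ne_bot hE hFg
  have hEF1 : E / F ⊓ 1 ≠ ⊥ := inf_ne_bot hEF submodule_one_ne_bot
  refine le_antisymm (le_inf ?_ (s.star_mono _ _ hEF1 submodule_one_ne_bot inf_le_right)) ?_
  · exact (s.star_mono _ _ hEF1 hEF inf_le_left).trans (s.star_div_le hE hF hEF)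
  calc s.star E / F ⊓ s.star 1 = barStar s E / F ⊓ barStar s 1 := by
        rw [s.barStar_eq_star h hE hEg, s.barStar_eq_star h submodule_one_ne_bot submodule_one_fg]
    _ ≤ barStar s (E / F) ⊓ barStar s 1 := inf_le_inf_right _ (s.barStar_div_le hFg E)
    _ = barStar s (E / F ⊓ 1) := (s.barStar_inf _ _).symm
    _ ≤ s.star (E / F ⊓ 1) := s.barStar_le_star hEF1

end SemistarOp

end FractionField

theorem statement6_general {D K : Type*} [CommRing D] [Field K] [Algebra D K]
    [IsFractionRing D K] (s : SemistarOp D K)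
    (h : IsStarDomain s.star) :
    (∀ E F : Submodule D K, E ≠ ⊥ → E.FG → F ≠ ⊥ → F.FG →
      s.star (E / F ⊓ 1) = (s.star E / F) ⊓ s.star 1) ∧
    StarEq (finStar (barStar s)) (finStar s.star) ∧
    (∀ E F : Submodule D K, E ≠ ⊥ → E.FG → F ≠ ⊥ → F.FG →
      s.star (E ⊓ F) = s.star E ⊓ s.star F) :=
  ⟨fun _ _ hE hEg hF hFg => s.star_colon_eq h hE hEg hF hFg,
    fun E _ => congrFun (finStar_congr fun _ hF hFg => s.barStar_eq_star h hF hFg) E,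
    fun _ _ hE hEg hF hFg => s.star_inf_eq h hE hEg hF hFg⟩

theorem statement6 {D K : Type*} [CommRing D] [IsDomain D] [Field K] [Algebra D K]
    [IsFractionRing D K] (s : SemistarOp D K)
    (hic : IsIntegrallyClosed D) (h : IsStarDomain s.star) :
    (∀ E F : Submodule D K, E ≠ ⊥ → E.FG → F ≠ ⊥ → F.FG →
      s.star (E / F ⊓ 1) = (s.star E / F) ⊓ s.star 1) ∧
    StarEq (finStar (barStar s)) (finStar s.star) ∧
    (∀ E F : Submodule D K, E ≠ ⊥ → E.FG → F ≠ ⊥ → F.FG →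
      s.star (E ⊓ F) = s.star E ⊓ s.star F) :=
  statement6_general s h

end Semistar
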